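/- The function x ↦ 𝒵_λ(T)^{-1} g_λ(x,T,x) is the centered Gaussian probability density on ℝ^d with variance σ_λ = sinh(λT)/(2λ(cosh(λT)-1)), i.e. it equals (2πσ_λ)^{-d/2} exp[-|x|²/(2σ_λ)]. -/

import Mathlib

open Real MeasureTheory
open scoped RealInnerProductSpace

noncomputable def mehler (d : ℕ) (lam : ℝ) (x : EuclideanSpace ℝ (Fin d)) (t : ℝ)
    (y : EuclideanSpace ℝ (Fin d)) : ℝ :=
  (2 * Real.pi * Real.sinh (lam * t) / lam) ^ (-(d : ℝ) / 2) *
    Real.exp (-(lam * (Real.cosh (lam * t) * (‖x‖ ^ 2 + ‖y‖ ^ 2) - 2 * ⟪x, y⟫)) /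
      (2 * Real.sinh (lam * t)))

/-- The variance `σ_λ(t)` of the paper. -/
noncomputable def mehlerVariance (lam t : ℝ) : ℝ :=
  sinh (lam * t) / (2 * lam * (cosh (lam * t) - 1))

theorem mehler_self (d : ℕ) (lam t : ℝ) (x : EuclideanSpace ℝ (Fin d)) :
    mehler d lam x t x = (2 * π * sinh (lam * t) / lam) ^ (-(d : ℝ) / 2) *
      exp (-(lam * (cosh (lam * t) - 1) * ‖x‖ ^ 2) / sinh (lam * t)) := by
  rw [mehler, real_inner_self_eq_norm_sq]
  congr 2
  field_simp
  ring

theorem two_mul_mehlerVariance (lam t : ℝ) :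
    2 * mehlerVariance lam t = sinh (lam * t) / (lam * (cosh (lam * t) - 1)) := by
  rw [mehlerVariance, mul_assoc, ← mul_div_assoc, mul_div_mul_left _ _ two_ne_zero]

theorem two_pi_mul_mehlerVariance (lam t : ℝ) :
    2 * π * mehlerVariance lam t =
      2 * π * sinh (lam * t) / lam / (2 * (cosh (lam * t) - 1)) := by
  rw [mehlerVariance, div_div]
  ring

theorem neg_div_two_mul_mehlerVariance (lam t r : ℝ) :
    -r / (2 * mehlerVariance lam t) = -(lam * (cosh (lam * t) - 1) * r) / sinh (lam * t) := by
  rw [two_mul_mehlerVariance, div_div_eq_mul_div]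
  ring

theorem mehler_diagonal_gaussian_density_general (d : ℕ) (lam T : ℝ)
    (hlam : 0 < lam) (hT : 0 < T) (x : EuclideanSpace ℝ (Fin d)) :
    ((2 * (Real.cosh (lam * T) - 1)) ^ (-(d : ℝ) / 2))⁻¹ * mehler d lam x T x =
      (2 * Real.pi * (Real.sinh (lam * T) / (2 * lam * (Real.cosh (lam * T) - 1)))) ^
          (-(d : ℝ) / 2) *
        Real.exp (-‖x‖ ^ 2 /
          (2 * (Real.sinh (lam * T) / (2 * lam * (Real.cosh (lam * T) - 1))))) := by
  have hprefactor : 0 ≤ 2 * π * sinh (lam * T) / lam := by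
    have := sinh_pos_iff.mpr (mul_pos hlam hT)
    positivity
  have hpartition : 0 ≤ 2 * (cosh (lam * T) - 1) := by
    linarith [one_le_cosh (lam * T)]
  change _ = (2 * π * mehlerVariance lam T) ^ (-(d : ℝ) / 2) *
    exp (-‖x‖ ^ 2 / (2 * mehlerVariance lam T))
  rw [mehler_self, two_pi_mul_mehlerVariance, div_rpow hprefactor hpartition,
    neg_div_two_mul_mehlerVariance]
  ring

theorem mehler_diagonal_gaussian_density (d : ℕ) (hd : 0 < d) (lam T : ℝ)
    (hlam : 0 < lam) (hT : 0 < T) (x : EuclideanSpace ℝ (Fin d)) :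
    ((2 * (Real.cosh (lam * T) - 1)) ^ (-(d : ℝ) / 2))⁻¹ * mehler d lam x T x =
      (2 * Real.pi * (Real.sinh (lam * T) / (2 * lam * (Real.cosh (lam * T) - 1)))) ^
          (-(d : ℝ) / 2) *
        Real.exp (-‖x‖ ^ 2 /
          (2 * (Real.sinh (lam * T) / (2 * lam * (Real.cosh (lam * T) - 1))))) :=
  mehler_diagonal_gaussian_density_general d lam T hlam hT x
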